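/- arXiv:2401.13771 — 2 statements merged into one kernel-verified Lean document; each statement's English description precedes it below -/
import Mathlib

section
/- For every weighted tree 𝐭 = (t, (w_v)_{v∈∂t}) with weights w_v ∈ [0,1), the integer part of the weighted Horton–Strahler number equals the classical Horton–Strahler number: ⌊𝐒(𝐭)⌋ = S(t). Moreover, there exists a leaf v ∈ ∂t such that the fractional part of 𝐒(𝐭) equals w_v. -/
/-- Finite rooted plane trees. -/
inductive PTree : Type where
  | node : List PTree → PTree

namespace PTree

/-- The (classical) Horton–Strahler number. -/
def hs : PTree → ℕ
  | node ts =>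
    let vals := ts.attach.map (fun s => hs s.1)
    vals.foldr max 0 + (if 2 ≤ vals.count (vals.foldr max 0) then 1 else 0)
decreasing_by simp_wf; have := List.sizeOf_lt_of_mem s.2; omega

end PTree

/-- `max_{i,j} max (v_i, v_j, 1_{i≠j} + min (v_i, v_j))` over a list of reals
(indices are distinguished via `List.enum`). -/
def pairCombine (l : List ℝ) : ℝ :=
  (((l.zipIdx.map Prod.swap).map (fun p => (l.zipIdx.map Prod.swap).map (fun q =>
      max (max p.2 q.2) ((if p.1 ≠ q.1 then (1:ℝ) else 0) + min p.2 q.2)))).flatten).foldr max 0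

/-- Weighted trees: finite rooted plane trees carrying a real number at each node; only the
numbers at the leaves (the weights) are relevant. -/
inductive WTree : Type where
  | node : ℝ → List WTree → WTree

namespace WTree

/-- The weighted Horton–Strahler number: the weight for a single node; otherwise
`max_{i,j} max (𝐒(𝐭_i), 𝐒(𝐭_j), 1_{i≠j} + min (𝐒(𝐭_i), 𝐒(𝐭_j)))` over the root subtrees. -/
def whs : WTree → ℝ
  | node w [] => w
  | node _ (t :: ts) => pairCombine ((t :: ts).attach.map (fun s => whs s.1))
decreasing_by simp_wf; have := List.sizeOf_lt_of_mem s.2; simp only [List.cons.sizeOf_spec] at this ⊢; omega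

/-- The underlying (plane) tree of a weighted tree. -/
def shape : WTree → PTree
  | node _ ts => .node (ts.attach.map (fun s => shape s.1))
decreasing_by simp_wf; have := List.sizeOf_lt_of_mem s.2; omega

/-- The list of the weights of the leaves, in depth-first order. -/
def leafWeights : WTree → List ℝ
  | node w [] => [w]
  | node _ (t :: ts) => ((t :: ts).attach.map (fun s => leafWeights s.1)).flatten
decreasing_by simp_wf; have := List.sizeOf_lt_of_mem s.2; simp only [List.cons.sizeOf_spec] at this ⊢; omega

end WTree

/-!
At a node, both Horton–Strahler numbers are the largest of the values
`max (max x y) (1_{i≠j} + min x y)` over pairs of children: for the weighted number this is its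
definition, and the classical rule (`M + 1` if the maximum `M` of the children's numbers is
attained twice, `M` otherwise) computes exactly this largest value. Since `⌊·⌋₊` is monotone and commutes
with adding `1`, it maps the weighted candidate values at a node onto the classical ones, so
inductively `⌊𝐒(𝐭)⌋ = S(t)`. Each candidate value is the value of a child, possibly plus `1`, so
the fractional part of `𝐒(𝐭)` is that of a child, and inductively a leaf weight.
-/

theorem List.isGreatest_foldr_max {α : Type*} [LinearOrder α] (b : α) (l : List α) :
    IsGreatest (insert b {x | x ∈ l}) (l.foldr max b) := by
  induction l with
  | nil => simp
  | cons a l ih =>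
    have h := ih.insert a
    rw [Set.insert_comm] at h
    simpa [Set.insert_def, List.mem_cons, or_assoc] using h

theorem List.two_le_count_iff_exists_getElem {α : Type*} [DecidableEq α] {l : List α} {a : α} :
    2 ≤ l.count a ↔
      ∃ (i j : ℕ) (hi : i < l.length) (hj : j < l.length), i ≠ j ∧ l[i] = a ∧ l[j] = a := by
  rw [← List.duplicate_iff_two_le_count, List.duplicate_iff_exists_distinct_get]
  constructor
  · rintro ⟨n, m, hnm, hn, hm⟩
    exact ⟨n, m, n.2, m.2, Fin.val_ne_of_ne hnm.ne, hn.symm, hm.symm⟩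
  · rintro ⟨i, j, hi, hj, hij, hli, hlj⟩
    rcases lt_or_gt_of_ne hij with h | h
    · exact ⟨⟨i, hi⟩, ⟨j, hj⟩, h, hli.symm, hlj.symm⟩
    · exact ⟨⟨j, hj⟩, ⟨i, hi⟩, h, hlj.symm, hli.symm⟩

theorem List.mem_map_swap_zipIdx {α : Type*} {l : List α} {p : ℕ × α} :
    p ∈ l.zipIdx.map Prod.swap ↔ ∃ h : p.1 < l.length, l[p.1] = p.2 := by
  rw [List.mem_map]
  constructor
  · rintro ⟨q, hq, rfl⟩
    exact List.getElem?_eq_some_iff.1 (List.mem_zipIdx_iff_getElem?.1 hq)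
  · rintro ⟨h, hp⟩
    exact ⟨p.swap, List.mem_zipIdx_iff_getElem?.2 (List.getElem?_eq_some_iff.2 ⟨h, hp⟩), rfl⟩

def pairValues {α : Type*} [LinearOrder α] [Zero α] [One α] [Add α] (l : List α) : Set α :=
  {v | ∃ (i j : ℕ) (hi : i < l.length) (hj : j < l.length),
    max (max l[i] l[j]) ((if i ≠ j then 1 else 0) + min l[i] l[j]) = v}

def hsCombine (l : List ℕ) : ℕ :=
  l.foldr max 0 + if 2 ≤ l.count (l.foldr max 0) then 1 else 0

theorem PTree.hs_node (ts : List PTree) : (PTree.node ts).hs = hsCombine (ts.map PTree.hs) := by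
  rw [PTree.hs, List.attach_map_val]
  rfl

theorem isGreatest_hsCombine {l : List ℕ} (hl : l ≠ []) :
    IsGreatest (pairValues l) (hsCombine l) := by
  unfold hsCombine
  set M := l.foldr max 0
  have hle : ∀ x ∈ l, x ≤ M := fun x hx => List.le_max_of_le' 0 hx le_rfl
  have hM : M ∈ l := by
    have := List.foldr_max_of_ne_nil (α := ℕ) hl
    exact List.maximum_mem this.symm
  by_cases hdup : 2 ≤ l.count M
  · obtain ⟨i, j, hi, hj, hij, hli, hlj⟩ := List.two_le_count_iff_exists_getElem.1 hdup
    rw [if_pos hdup]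
    refine ⟨⟨i, j, hi, hj, by simp [hij, hli, hlj, add_comm]⟩, ?_⟩
    rintro _ ⟨i', j', hi', hj', rfl⟩
    have := hle _ (List.getElem_mem hi')
    have := hle _ (List.getElem_mem hj')
    split_ifs <;> omega
  · rw [if_neg hdup]
    obtain ⟨i, hi, hli⟩ := List.getElem_of_mem hM
    refine ⟨⟨i, i, hi, hi, by simp [hli]⟩, ?_⟩
    rintro _ ⟨i', j', hi', hj', rfl⟩
    have hnot : ¬ (i' ≠ j' ∧ l[i'] = M ∧ l[j'] = M) := fun h =>
      hdup (List.two_le_count_iff_exists_getElem.2 ⟨i', j', hi', hj', h⟩)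
    have := hle _ (List.getElem_mem hi')
    have := hle _ (List.getElem_mem hj')
    split_ifs <;> omega

theorem isGreatest_pairCombine_insert_zero (l : List ℝ) :
    IsGreatest (insert 0 (pairValues l)) (pairCombine l) := by
  unfold pairCombine
  refine Eq.subst (motive := fun S => IsGreatest (insert 0 S) _) ?_
    (List.isGreatest_foldr_max (0 : ℝ) _)
  ext v
  rw [Set.mem_ofPred_eq, List.mem_flatten]
  constructor
  · rintro ⟨_, hL, hv⟩
    obtain ⟨p, hp, rfl⟩ := List.mem_map.1 hL
    obtain ⟨q, hq, rfl⟩ := List.mem_map.1 hv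
    obtain ⟨hi, hpi⟩ := List.mem_map_swap_zipIdx.1 hp
    obtain ⟨hj, hqj⟩ := List.mem_map_swap_zipIdx.1 hq
    exact ⟨p.1, q.1, hi, hj, by rw [hpi, hqj]⟩
  · rintro ⟨i, j, hi, hj, rfl⟩
    have hmem : ∀ k (hk : k < l.length), (k, l[k]) ∈ l.zipIdx.map Prod.swap :=
      fun k hk => List.mem_map_swap_zipIdx.2 ⟨hk, rfl⟩
    exact ⟨_, List.mem_map_of_mem (hmem i hi), List.mem_map_of_mem (hmem j hj)⟩

theorem pairCombine_nonneg (l : List ℝ) : 0 ≤ pairCombine l :=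
  (isGreatest_pairCombine_insert_zero l).2 (Set.mem_insert _ _)

theorem isGreatest_pairCombine {l : List ℝ} (hl : l ≠ []) (h0 : ∀ x ∈ l, 0 ≤ x) :
    IsGreatest (pairValues l) (pairCombine l) := by
  obtain ⟨hmem, hub⟩ := isGreatest_pairCombine_insert_zero l
  refine ⟨?_, fun v hv => hub (Set.mem_insert_of_mem _ hv)⟩
  rcases hmem with hzero | hmem
  · have hl0 : 0 < l.length := List.length_pos_iff.2 hl
    have hdiag : l[0] ∈ pairValues l := ⟨0, 0, hl0, hl0, by simp⟩
    have : l[0] = 0 :=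
      le_antisymm (hzero ▸ hub (Set.mem_insert_of_mem _ hdiag)) (h0 _ (List.getElem_mem hl0))
    exact hzero ▸ this ▸ hdiag
  · exact hmem

section FloorFract

variable {R : Type*} [LinearOrder R]

theorem natFloor_pairValue [Semiring R] [IsStrictOrderedRing R] [FloorSemiring R]
    {x y : R} (hx : 0 ≤ x) (hy : 0 ≤ y) (p : Prop) [Decidable p] :
    ⌊max (max x y) ((if p then 1 else 0) + min x y)⌋₊ =
      max (max ⌊x⌋₊ ⌊y⌋₊) ((if p then 1 else 0) + min ⌊x⌋₊ ⌊y⌋₊) := by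
  have hmono : Monotone (Nat.floor : R → ℕ) := Nat.floor_mono
  rw [hmono.map_max, hmono.map_max]
  split_ifs
  · rw [add_comm, Nat.floor_add_one (le_min hx hy), add_comm, hmono.map_min]
  · simp [hmono.map_min]

theorem image_natFloor_pairValues [Semiring R] [IsStrictOrderedRing R]
    [FloorSemiring R] {l : List R} (h0 : ∀ x ∈ l, 0 ≤ x) :
    Nat.floor '' pairValues l = pairValues (l.map Nat.floor) := by
  ext n
  constructor
  · rintro ⟨_, ⟨i, j, hi, hj, rfl⟩, rfl⟩
    refine ⟨i, j, by simpa using hi, by simpa using hj, ?_⟩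
    rw [natFloor_pairValue (h0 _ (List.getElem_mem hi)) (h0 _ (List.getElem_mem hj))]
    simp only [List.getElem_map]
  · rintro ⟨i, j, hi, hj, rfl⟩
    rw [List.length_map] at hi hj
    refine ⟨_, ⟨i, j, hi, hj, rfl⟩, ?_⟩
    rw [natFloor_pairValue (h0 _ (List.getElem_mem hi)) (h0 _ (List.getElem_mem hj))]
    simp only [List.getElem_map]

theorem exists_fract_eq_of_mem_pairValues [Ring R] [IsStrictOrderedRing R]
    [FloorRing R] {l : List R} {v : R} (hv : v ∈ pairValues l) :
    ∃ x ∈ l, Int.fract v = Int.fract x := by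
  obtain ⟨i, j, hi, hj, rfl⟩ := hv
  have hshift : ∀ a : R, Int.fract ((if i ≠ j then 1 else 0) + a) = Int.fract a := by
    intro a
    split_ifs <;> simp [Int.fract_one_add]
  have hi' := List.getElem_mem hi
  have hj' := List.getElem_mem hj
  rcases max_choice (max l[i] l[j]) ((if i ≠ j then 1 else 0) + min l[i] l[j]) with h | h <;>
    rw [h]
  · rcases max_choice l[i] l[j] with h' | h' <;> rw [h']
    exacts [⟨_, hi', rfl⟩, ⟨_, hj', rfl⟩]
  · rw [hshift]
    rcases min_choice l[i] l[j] with h' | h' <;> rw [h']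
    exacts [⟨_, hi', rfl⟩, ⟨_, hj', rfl⟩]

end FloorFract

theorem pairCombine_eq_hsCombine_add_fract {l : List ℝ} (hl : l ≠ []) (h0 : ∀ x ∈ l, 0 ≤ x) :
    ∃ x ∈ l, pairCombine l = hsCombine (l.map Nat.floor) + Int.fract x := by
  have hgreatest := isGreatest_pairCombine hl h0
  have hfloor : ⌊pairCombine l⌋₊ = hsCombine (l.map Nat.floor) := by
    have h := Nat.floor_mono.map_isGreatest hgreatest
    rw [image_natFloor_pairValues h0] at h
    exact h.unique (isGreatest_hsCombine (by simpa using hl))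
  obtain ⟨x, hx, hfract⟩ := exists_fract_eq_of_mem_pairValues hgreatest.1
  refine ⟨x, hx, ?_⟩
  rw [← hfloor, ← hfract, natCast_floor_eq_intCast_floor (pairCombine_nonneg l),
    Int.floor_add_fract]

namespace WTree

@[elab_as_elim]
theorem induction_node {motive : WTree → Prop}
    (node : ∀ w ts, (∀ t ∈ ts, motive t) → motive (.node w ts)) : ∀ t, motive t
  | .node w ts => node w ts fun t _ => induction_node node t
decreasing_by simp_wf; have := List.sizeOf_lt_of_mem ‹t ∈ ts›; omega

theorem whs_node_cons (w : ℝ) (t : WTree) (ts : List WTree) :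
    (node w (t :: ts)).whs = pairCombine ((t :: ts).map whs) := by
  rw [whs, List.attach_map_val]

theorem hs_shape_node (w : ℝ) (ts : List WTree) :
    (node w ts).shape.hs = hsCombine (ts.map (PTree.hs ∘ shape)) := by
  rw [shape, List.attach_map_val, PTree.hs_node, List.map_map]

theorem leafWeights_subset_node {w : ℝ} {t : WTree} {ts : List WTree} (ht : t ∈ ts) :
    t.leafWeights ⊆ (node w ts).leafWeights := by
  cases ts with
  | nil => simp at ht
  | cons s ss =>
    rw [leafWeights, List.attach_map_val]
    exact fun x hx => List.mem_flatten.2 ⟨_, List.mem_map_of_mem ht, hx⟩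

theorem exists_whs_eq_hs_add_leafWeight (t : WTree)
    (hw : ∀ w ∈ t.leafWeights, w ∈ Set.Ico (0 : ℝ) 1) :
    ∃ w ∈ t.leafWeights, t.whs = t.shape.hs + w := by
  induction t using induction_node with
  | node a ts ih =>
  cases ts with
  | nil => exact ⟨a, by simp [leafWeights], by simp [whs, shape, PTree.hs_node, hsCombine]⟩
  | cons c cs =>
    have hchild : ∀ s ∈ c :: cs, ∃ w ∈ (node a (c :: cs)).leafWeights,
        w ∈ Set.Ico (0 : ℝ) 1 ∧ s.whs = s.shape.hs + w := by
      intro s hs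
      have hsub := leafWeights_subset_node (w := a) hs
      obtain ⟨w, hws, hs_eq⟩ := ih s hs fun w hws => hw w (hsub hws)
      exact ⟨w, hsub hws, hw w (hsub hws), hs_eq⟩
    have h0 : ∀ x ∈ (c :: cs).map whs, 0 ≤ x := by
      simp only [List.mem_map, forall_exists_index, and_imp, forall_apply_eq_imp_iff₂]
      intro s hs
      obtain ⟨w, -, hIco, hs_eq⟩ := hchild s hs
      rw [hs_eq]
      exact add_nonneg (Nat.cast_nonneg _) hIco.1
    have hfloor : ((c :: cs).map whs).map Nat.floor = (c :: cs).map (PTree.hs ∘ shape) := by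
      rw [List.map_map]
      refine List.map_congr_left fun s hs => ?_
      obtain ⟨w, -, hIco, hs_eq⟩ := hchild s hs
      simp [hs_eq, Nat.floor_eq_iff (add_nonneg (Nat.cast_nonneg _) hIco.1), hIco.1, hIco.2]
    obtain ⟨x, hx, hpc⟩ := pairCombine_eq_hsCombine_add_fract (by simp) h0
    obtain ⟨s, hs, rfl⟩ := List.mem_map.1 hx
    obtain ⟨w, hw, hIco, hs_eq⟩ := hchild s hs
    refine ⟨w, hw, ?_⟩
    rw [whs_node_cons, hpc, hfloor, hs_shape_node, hs_eq, Int.fract_natCast_add,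
      Int.fract_eq_self.2 hIco]

end WTree

/-- For every weighted tree `𝐭` with leaf weights in `[0,1)`, the integer part
of the weighted Horton–Strahler number equals the classical Horton–Strahler number of the
underlying tree, and the fractional part equals the weight of some leaf. -/
theorem stmt_4 (t : WTree) (hw : ∀ w ∈ t.leafWeights, w ∈ Set.Ico (0:ℝ) 1) :
    ⌊t.whs⌋ = (PTree.hs t.shape : ℤ)
      ∧ ∃ w ∈ t.leafWeights, Int.fract t.whs = w := by
  obtain ⟨w, hmem, heq⟩ := t.exists_whs_eq_hs_add_leafWeight hw
  have hw01 := hw w hmem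
  refine ⟨?_, w, hmem, ?_⟩
  · rw [heq, Int.floor_natCast_add, Int.floor_eq_zero_iff.2 hw01, add_zero]
  · rw [heq, Int.fract_natCast_add, Int.fract_eq_self.2 hw01]
end

section
/- Let X, Y, Z be almost surely finite nonnegative random variables with X and Y independent, E[Y] < 1, and Z integrable. If there exists a random variable X' with the same distribution as X satisfying X' ≤ Y·X + Z almost surely, then X is integrable and E[X] ≤ E[Z]/(1 - E[Y]). -/
/-!
Truncate at a finite level `N` and write `s_N = E[X; X ≤ N]`, so that
`E[X ⊓ N] = s_N + N P(X > N)`. Since `X'` has the law of `X`, `E[X ⊓ N] = E[X' ⊓ N]`, and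
pointwise `(Y X + Z) ⊓ N ≤ Y X 1{X ≤ N} + Z + N 1{X > N}`. Independence turns the expectation
of the first term into `E[Y] s_N`, and cancelling the finite quantity `N P(X > N)` leaves
`s_N ≤ E[Y] s_N + E[Z]`, i.e. `s_N ≤ E[Z] / (1 - E[Y])`. As `X` is a.s. finite, `s_N ↑ E[X]`.
-/

open MeasureTheory ProbabilityTheory
open scoped ENNReal

theorem ENNReal.le_div_one_sub_of_le_mul_add {s a c : ℝ≥0∞} (hs : s ≠ ∞) (ha : a < 1)
    (h : s ≤ a * s + c) : s ≤ c / (1 - a) := by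
  have has : a * s ≠ ∞ := ENNReal.mul_ne_top (ha.trans ENNReal.one_lt_top).ne hs
  have hsplit : (1 - a) * s + a * s = s := by
    rw [← add_mul, tsub_add_cancel_of_le ha.le, one_mul]
  have : (1 - a) * s ≤ c := by
    rw [← ENNReal.add_le_add_iff_right has, hsplit, add_comm]
    exact h
  rw [ENNReal.le_div_iff_mul_le (Or.inl (tsub_pos_of_lt ha).ne')
    (Or.inl (tsub_le_self.trans_lt ENNReal.one_lt_top).ne), mul_comm]
  exact this

section Truncation

variable {Ω : Type*} [MeasurableSpace Ω] {μ : Measure Ω} {X : Ω → ℝ≥0∞}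

theorem lintegral_min_const_eq_setLIntegral_add (hX : Measurable X) (N : ℝ≥0∞) :
    ∫⁻ ω, X ω ⊓ N ∂μ = ∫⁻ ω in {ω | X ω ≤ N}, X ω ∂μ + N * μ {ω | X ω ≤ N}ᶜ := by
  have hA : MeasurableSet {ω | X ω ≤ N} := measurableSet_le hX measurable_const
  have hsplit : ∀ ω, X ω ⊓ N
      = {ω | X ω ≤ N}.indicator X ω + {ω | X ω ≤ N}ᶜ.indicator (fun _ => N) ω := by
    intro ω
    by_cases h : X ω ≤ N
    · simp [h]
    · simp [h, (not_le.1 h).le]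
  rw [lintegral_congr hsplit, lintegral_add_left (hX.indicator hA), lintegral_indicator hA,
    lintegral_indicator_const hA.compl]

theorem setLIntegral_le_const_ne_top [IsFiniteMeasure μ] {N : ℝ≥0∞} (hN : N ≠ ∞) :
    ∫⁻ ω in {ω | X ω ≤ N}, X ω ∂μ ≠ ∞ := by
  refine ne_top_of_le_ne_top (ENNReal.mul_ne_top hN (measure_ne_top μ {ω | X ω ≤ N})) ?_
  rw [← setLIntegral_const]
  exact setLIntegral_mono measurable_const fun _ h => h

theorem lintegral_eq_iSup_setLIntegral_le_natCast (hXfin : ∀ᵐ ω ∂μ, X ω < ∞) :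
    ∫⁻ ω, X ω ∂μ = ⨆ n : ℕ, ∫⁻ ω in {ω | X ω ≤ n}, X ω ∂μ := by
  have hdir : Directed (· ⊆ ·) fun n : ℕ => {ω | X ω ≤ n} :=
    Monotone.directed_le fun m n hmn ω (h : X ω ≤ m) => h.trans (by exact_mod_cast hmn)
  have hcover : (⋃ n : ℕ, {ω | X ω ≤ n}) =ᵐ[μ] Set.univ := by
    filter_upwards [hXfin] with ω hω
    obtain ⟨n, hn⟩ := ENNReal.exists_nat_gt hω.ne
    exact eq_true (Set.mem_iUnion.2 ⟨n, hn.le⟩)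
  rw [← setLIntegral_iUnion_of_directed _ hdir, setLIntegral_congr hcover, setLIntegral_univ]

theorem setLIntegral_le_le_mul_add_of_le_mul_add [IsFiniteMeasure μ] {Y Z X' : Ω → ℝ≥0∞}
    (hX : Measurable X) (hY : Measurable Y) (hX' : Measurable X') (hindep : IndepFun X Y μ)
    (hlaw : μ.map X' = μ.map X) (hle : ∀ᵐ ω ∂μ, X' ω ≤ Y ω * X ω + Z ω)
    {N : ℝ≥0∞} (hN : N ≠ ∞) :
    ∫⁻ ω in {ω | X ω ≤ N}, X ω ∂μ
      ≤ (∫⁻ ω, Y ω ∂μ) * ∫⁻ ω in {ω | X ω ≤ N}, X ω ∂μ + ∫⁻ ω, Z ω ∂μ := by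
  set A := {ω | X ω ≤ N}
  have hA : MeasurableSet A := measurableSet_le hX measurable_const
  have hlawN : ∫⁻ ω, X' ω ⊓ N ∂μ = ∫⁻ ω, X ω ⊓ N ∂μ :=
    ((IdentDistrib.mk hX'.aemeasurable hX.aemeasurable hlaw).comp
      (measurable_id.min measurable_const)).lintegral_eq
  have hpt : ∀ ω, (Y ω * X ω + Z ω) ⊓ N
      ≤ Y ω * A.indicator X ω + Z ω + Aᶜ.indicator (fun _ => N) ω := by
    intro ω
    by_cases h : X ω ≤ N <;> simp [A, h]
  have hindepN : ∫⁻ ω, Y ω * A.indicator X ω ∂μ = (∫⁻ ω, Y ω ∂μ) * ∫⁻ ω in A, X ω ∂μ := by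
    rw [lintegral_mul_eq_lintegral_mul_lintegral_of_indepFun'' hY.aemeasurable
      (hX.indicator hA).aemeasurable (hindep.symm.comp measurable_id (measurable_id.indicator measurableSet_Iic)),
      lintegral_indicator hA]
  have hbound : ∫⁻ ω in A, X ω ∂μ + N * μ Aᶜ
      ≤ (∫⁻ ω, Y ω ∂μ) * ∫⁻ ω in A, X ω ∂μ + ∫⁻ ω, Z ω ∂μ + N * μ Aᶜ :=
    calc ∫⁻ ω in A, X ω ∂μ + N * μ Aᶜ
        = ∫⁻ ω, X' ω ⊓ N ∂μ := by rw [hlawN, lintegral_min_const_eq_setLIntegral_add hX]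
      _ ≤ ∫⁻ ω, (Y ω * X ω + Z ω) ⊓ N ∂μ :=
        lintegral_mono_ae (hle.mono fun ω hω => inf_le_inf_right N hω)
      _ ≤ ∫⁻ ω, (Y ω * A.indicator X ω + Z ω + Aᶜ.indicator (fun _ => N) ω) ∂μ :=
        lintegral_mono hpt
      _ = (∫⁻ ω, Y ω ∂μ) * ∫⁻ ω in A, X ω ∂μ + ∫⁻ ω, Z ω ∂μ + N * μ Aᶜ := by
        rw [lintegral_add_right _ (measurable_const.indicator hA.compl),
          lintegral_add_left (f := fun ω => Y ω * A.indicator X ω) (hY.mul (hX.indicator hA)),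
          hindepN, lintegral_indicator_const hA.compl]
  exact (ENNReal.add_le_add_iff_right (ENNReal.mul_ne_top hN (measure_ne_top μ _))).1 hbound

end Truncation

theorem stmt_14_general {Ω : Type*} [MeasurableSpace Ω] (P : Measure Ω) [IsProbabilityMeasure P]
    (X Y Z X' : Ω → ENNReal)
    (hX : Measurable X) (hY : Measurable Y) (hX' : Measurable X')
    (hXfin : ∀ᵐ ω ∂P, X ω < ⊤)
    (hindep : ProbabilityTheory.IndepFun X Y P)
    (hEY : ∫⁻ ω, Y ω ∂P < 1)
    (hZint : ∫⁻ ω, Z ω ∂P < ⊤)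
    (hlaw : Measure.map X' P = Measure.map X P)
    (hle : ∀ᵐ ω ∂P, X' ω ≤ Y ω * X ω + Z ω) :
    ∫⁻ ω, X ω ∂P < ⊤
      ∧ ∫⁻ ω, X ω ∂P ≤ (∫⁻ ω, Z ω ∂P) / (1 - ∫⁻ ω, Y ω ∂P) := by
  set a := ∫⁻ ω, Y ω ∂P
  have htrunc : ∀ n : ℕ, ∫⁻ ω in {ω | X ω ≤ n}, X ω ∂P ≤ (∫⁻ ω, Z ω ∂P) / (1 - a) := fun n =>
    ENNReal.le_div_one_sub_of_le_mul_add (setLIntegral_le_const_ne_top (ENNReal.natCast_ne_top n))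
      hEY (setLIntegral_le_le_mul_add_of_le_mul_add hX hY hX' hindep hlaw hle
        (ENNReal.natCast_ne_top n))
  have hbound : ∫⁻ ω, X ω ∂P ≤ (∫⁻ ω, Z ω ∂P) / (1 - a) := by
    rw [lintegral_eq_iSup_setLIntegral_le_natCast hXfin]
    exact iSup_le htrunc
  exact ⟨hbound.trans_lt (ENNReal.div_lt_top hZint.ne (tsub_pos_of_lt hEY).ne'), hbound⟩

/-- Let `X, Y, Z` be almost surely finite nonnegative random variables
(valued in `[0,∞]`) with `X` and `Y` independent, `E[Y] < 1` and `Z` integrable. If there is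
a random variable `X'` with the same distribution as `X` satisfying `X' ≤ Y·X + Z` almost
surely, then `X` is integrable and `E[X] ≤ E[Z]/(1 - E[Y])`. -/
theorem stmt_14 {Ω : Type*} [MeasurableSpace Ω] (P : Measure Ω) [IsProbabilityMeasure P]
    (X Y Z X' : Ω → ENNReal)
    (hX : Measurable X) (hY : Measurable Y) (hZ : Measurable Z) (hX' : Measurable X')
    (hXfin : ∀ᵐ ω ∂P, X ω < ⊤) (hYfin : ∀ᵐ ω ∂P, Y ω < ⊤) (hZfin : ∀ᵐ ω ∂P, Z ω < ⊤)
    (hindep : ProbabilityTheory.IndepFun X Y P)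
    (hEY : ∫⁻ ω, Y ω ∂P < 1)
    (hZint : ∫⁻ ω, Z ω ∂P < ⊤)
    (hlaw : Measure.map X' P = Measure.map X P)
    (hle : ∀ᵐ ω ∂P, X' ω ≤ Y ω * X ω + Z ω) :
    ∫⁻ ω, X ω ∂P < ⊤
      ∧ ∫⁻ ω, X ω ∂P ≤ (∫⁻ ω, Z ω ∂P) / (1 - ∫⁻ ω, Y ω ∂P) :=
  stmt_14_general P X Y Z X' hX hY hX' hXfin hindep hEY hZint hlaw hle
end
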